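/- Let N ≥ 2, let c_1,…,c_N be positive real numbers, let ν_1,…,ν_N be positive integers, and let σ > 0 be real. Then the function y = (y_1,…,y_{N−1}) ↦ (∑_{i=1}^{N−1} c_i e^{−ν_i y_i} + c_N e^{ν_N (y_1+⋯+y_{N−1})})^{−σ} is (Lebesgue) integrable on ℝ^{N−1}. -/

import Mathlib

/-!
Write `g y = ∑ aᵢ exp (-wᵢ yᵢ) + b exp (μ ∑ yᵢ)` with all `aᵢ, b ≥ m > 0` and all weights `≥ 1`.
If `g y < m exp t` with `t ≥ 0`, then every `-yᵢ` and the sum `∑ yᵢ` are below `t`, and since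
`|yᵢ| ≤ yᵢ + 2t` this forces `∑ |yᵢ| < (2n + 1) t`. Hence `g y ≥ m exp (‖y‖₁ / (2n + 1))`, so
`g ^ (-σ)` is dominated by a multiple of `exp (-β ‖y‖₁)`, a product of integrable one-variable
functions.
-/

open Finset Real MeasureTheory

lemma integrable_exp_neg_mul_abs {b : ℝ} (hb : 0 < b) :
    Integrable (fun x : ℝ => exp (-b * |x|)) := by
  rw [← integrableOn_univ, ← Set.Iic_union_Ioi (a := 0), integrableOn_union]
  constructor
  · refine (integrableOn_exp_mul_Iic hb 0).congr_fun (fun x hx => ?_) measurableSet_Iic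
    simp [abs_of_nonpos (Set.mem_Iic.mp hx)]
  · refine (integrableOn_exp_mul_Ioi (neg_neg_of_pos hb) 0).congr_fun (fun x hx => ?_)
      measurableSet_Ioi
    simp [abs_of_pos (Set.mem_Ioi.mp hx)]

lemma lt_of_mul_lt_of_one_le {w x t : ℝ} (hw : 1 ≤ w) (ht : 0 ≤ t) (h : w * x < t) : x < t := by
  rcases le_or_gt 0 x with hx | hx <;> nlinarith

section

variable {ι : Type*} [Fintype ι]

lemma integrable_exp_neg_mul_sum_abs {b : ℝ} (hb : 0 < b) :
    Integrable (fun y : ι → ℝ => exp (-b * ∑ i, |y i|)) := by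
  have hprod : Integrable (fun y : ι → ℝ => ∏ i, exp (-b * |y i|)) :=
    Integrable.fintype_prod fun _ => integrable_exp_neg_mul_abs hb
  simpa only [mul_sum, exp_sum] using hprod

lemma sum_abs_lt_of_neg_le_of_sum_lt {y : ι → ℝ} {t : ℝ} (ht : 0 ≤ t) (hy : ∀ i, -y i ≤ t)
    (hs : ∑ i, y i < t) : ∑ i, |y i| < (2 * Fintype.card ι + 1) * t := by
  have habs : ∀ i, |y i| ≤ y i + 2 * t := fun i => by
    rcases le_or_gt 0 (y i) with h | h
    · rw [abs_of_nonneg h]; linarith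
    · rw [abs_of_neg h]; linarith [hy i]
  calc ∑ i, |y i| ≤ ∑ i, (y i + 2 * t) := sum_le_sum fun i _ => habs i
    _ = ∑ i, y i + 2 * Fintype.card ι * t := by
      rw [sum_add_distrib, sum_const, card_univ, nsmul_eq_mul]; ring
    _ < (2 * Fintype.card ι + 1) * t := by linarith

lemma mul_exp_sum_abs_le_sum_exp {a w : ι → ℝ} {b μ m : ℝ} (hm : 0 < m) (ha : ∀ i, m ≤ a i)
    (hb : m ≤ b) (hw : ∀ i, 1 ≤ w i) (hμ : 1 ≤ μ) (y : ι → ℝ) :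
    m * exp ((∑ i, |y i|) / (2 * Fintype.card ι + 1)) ≤
      ∑ i, a i * exp (-w i * y i) + b * exp (μ * ∑ i, y i) := by
  set t := (∑ i, |y i|) / (2 * Fintype.card ι + 1)
  have ht : 0 ≤ t := by positivity
  by_contra! hlt
  have hexp_lt : ∀ {c u : ℝ}, m ≤ c → c * exp u < m * exp t → u < t := fun hc h =>
    exp_lt_exp.mp <| lt_of_mul_lt_mul_left
      ((mul_le_mul_of_nonneg_right hc (exp_pos _).le).trans_lt h) hm.le
  have hsum_nonneg : 0 ≤ ∑ i, a i * exp (-w i * y i) :=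
    sum_nonneg fun i _ => mul_nonneg (hm.le.trans (ha i)) (exp_pos _).le
  have hlast_nonneg : 0 ≤ b * exp (μ * ∑ i, y i) := mul_nonneg (hm.le.trans hb) (exp_pos _).le
  have hy : ∀ i, -y i ≤ t := fun i => by
    have hterm : a i * exp (-w i * y i) ≤ ∑ j, a j * exp (-w j * y j) :=
      single_le_sum (f := fun j => a j * exp (-w j * y j))
        (fun j _ => mul_nonneg (hm.le.trans (ha j)) (exp_pos _).le) (mem_univ i)
    refine (lt_of_mul_lt_of_one_le (hw i) ht ?_).le
    rw [← neg_mul_comm]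
    exact hexp_lt (ha i) (by linarith)
  have hs : ∑ i, y i < t := lt_of_mul_lt_of_one_le hμ ht (hexp_lt hb (by linarith))
  have hcontra := sum_abs_lt_of_neg_le_of_sum_lt ht hy hs
  rw [mul_div_cancel₀ _ (by positivity)] at hcontra
  exact lt_irrefl _ hcontra

theorem integrable_rpow_neg_sum_exp {a w : ι → ℝ} {b μ σ : ℝ} (ha : ∀ i, 0 < a i) (hb : 0 < b)
    (hw : ∀ i, 1 ≤ w i) (hμ : 1 ≤ μ) (hσ : 0 < σ) :
    Integrable (fun y : ι → ℝ => (∑ i, a i * exp (-w i * y i) + b * exp (μ * ∑ i, y i)) ^ (-σ)) := by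
  set g : (ι → ℝ) → ℝ := fun y => ∑ i, a i * exp (-w i * y i) + b * exp (μ * ∑ i, y i)
  -- the least of `b` and the `aᵢ`; indexing by `Option ι` keeps the index set nonempty
  set m := univ.inf' univ_nonempty fun o : Option ι => o.elim b a
  have hm : 0 < m := (lt_inf'_iff _).mpr fun o _ => by cases o <;> simp [hb, ha]
  have hg_ge := mul_exp_sum_abs_le_sum_exp hm (fun i => inf'_le _ (mem_univ (some i)))
    (inf'_le _ (mem_univ none)) hw hμ
  have hg_pos : ∀ y, 0 < g y := fun y => (mul_pos hm (exp_pos _)).trans_le (hg_ge y)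
  have hg_cont : Continuous g := by fun_prop
  refine ((integrable_exp_neg_mul_sum_abs (b := σ / (2 * Fintype.card ι + 1)) (by positivity)).const_mul (m ^ (-σ))).mono'
    (hg_cont.rpow_const fun y => .inl (hg_pos y).ne').aestronglyMeasurable
    (ae_of_all _ fun y => ?_)
  rw [norm_of_nonneg (rpow_nonneg (hg_pos y).le _)]
  calc g y ^ (-σ) ≤ (m * exp ((∑ i, |y i|) / (2 * Fintype.card ι + 1))) ^ (-σ) :=
        rpow_le_rpow_of_nonpos (mul_pos hm (exp_pos _)) (hg_ge y) (neg_nonpos.mpr hσ.le)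
    _ = m ^ (-σ) * exp (-(σ / (2 * Fintype.card ι + 1)) * ∑ i, |y i|) := by
        rw [mul_rpow hm.le (exp_pos _).le, ← exp_mul]
        ring_nf

end

theorem integrable_inv_power_sum_exp (N : ℕ) (hN : 2 ≤ N) (c : Fin N → ℝ)
    (hc : ∀ i, 0 < c i) (ν : Fin N → ℕ) (hν : ∀ i, 0 < ν i)
    (σ : ℝ) (hσ : 0 < σ) :
    Integrable (fun y : Fin (N - 1) → ℝ =>
      ((∑ i : Fin (N - 1), c (Fin.castLE (Nat.sub_le N 1) i) *
          Real.exp (-(ν (Fin.castLE (Nat.sub_le N 1) i) : ℝ) * y i)) +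
        c ⟨N - 1, by omega⟩ *
          Real.exp ((ν (⟨N - 1, by omega⟩ : Fin N) : ℝ) * ∑ i, y i)) ^ (-σ))
      volume :=
  integrable_rpow_neg_sum_exp (fun _ => hc _) (hc _) (fun _ => Nat.one_le_cast.mpr (hν _))
    (Nat.one_le_cast.mpr (hν _)) hσ
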